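/- Let H be an ℵ₀-monoid and x ∈ H with a + ℵ₀·x = ℵ₀·x for some a ∈ H. Then for every finite n ≥ 1, n·a + ℵ₀·x = ℵ₀·x, and moreover ℵ₀·a + ℵ₀·x = ℵ₀·x. -/

import Mathlib

/-- An ℵ₀-monoid: a set with 0 and a countable summation map satisfying (A1) and (A2). -/
structure AlephMonoid (H : Type*) where
  zero : H
  sum : (ℕ → H) → H
  a1 : ∀ x : ℕ → H, (∀ i, i ≠ 0 → x i = zero) → sum x = x 0
  a2 : ∀ (x : ℕ × ℕ → H) (π : ℕ × ℕ ≃ ℕ),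
    sum (fun i => sum (fun j => x (i, j))) = sum (fun k => x (π.symm k))

namespace AlephMonoid

variable {H : Type*}

/-- The induced binary addition. -/
def add (M : AlephMonoid H) (a b : H) : H :=
  M.sum (fun i => if i = 0 then a else if i = 1 then b else M.zero)

/-- ℵ₀·a : the countable sum of copies of `a`. -/
def infMul (M : AlephMonoid H) (a : H) : H := M.sum (fun _ => a)

/-- n·a : finite multiples. -/
def nsmul (M : AlephMonoid H) : ℕ → H → H
  | 0, _ => M.zero
  | n + 1, a => M.add a (M.nsmul n a)

/-- `y ∈ add(x)` : `y` is a direct summand of a finite multiple of `x`. -/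
def inAdd (M : AlephMonoid H) (x y : H) : Prop :=
  ∃ z : H, ∃ n : ℕ, 1 ≤ n ∧ M.add y z = M.nsmul n x

/-- Multiplication by a cardinal α with 0 ≤ α ≤ ℵ₀ (`none` stands for ℵ₀). -/
def cmul (M : AlephMonoid H) : Option ℕ → H → H
  | some n, a => M.nsmul n a
  | none, a => M.infMul a

/-- The finite sum `Σ_{i=a}^{b} f i`, expressed via the countable sum of a
family supported on the interval `[a, b]`. -/
def intervalSum (M : AlephMonoid H) (f : ℕ → H) (a b : ℕ) : H :=
  M.sum (fun i => if a ≤ i ∧ i ≤ b then f i else M.zero)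

end AlephMonoid

/-! `ℵ₀·(ℵ₀·x) = ℵ₀·x` and `ℵ₀·(a + ℵ₀·x) = ℵ₀·a + ℵ₀·x`, so applying `ℵ₀·` to the hypothesis
`a + ℵ₀·x = ℵ₀·x` gives the infinite case; the finite multiples are absorbed one copy of `a` at a
time, by associativity. -/

namespace AlephMonoid

variable {H : Type*} (M : AlephMonoid H)

lemma sum_sum_comp_equiv (x : ℕ × ℕ → H) (e : ℕ × ℕ ≃ ℕ × ℕ) :
    M.sum (fun i => M.sum fun j => x (e (i, j))) = M.sum (fun i => M.sum fun j => x (i, j)) := by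
  let π := Denumerable.eqv (ℕ × ℕ)
  refine ((M.a2 (fun p => x (e p)) (e.trans π)).trans ?_).trans (M.a2 x π).symm
  simp

lemma sum_sum_comm (x : ℕ → ℕ → H) :
    M.sum (fun i => M.sum fun j => x i j) = M.sum (fun j => M.sum fun i => x i j) :=
  M.sum_sum_comp_equiv (fun p => x p.2 p.1) (Equiv.prodComm ℕ ℕ)

lemma sum_const_zero : M.sum (fun _ => M.zero) = M.zero :=
  M.a1 _ fun _ _ => rfl

lemma sum_ite_eq_zero (c : H) : M.sum (fun i => if i = 0 then c else M.zero) = c :=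
  M.a1 _ fun _ hi => if_neg hi

lemma sum_comp_equiv (σ : ℕ ≃ ℕ) (f : ℕ → H) : M.sum (fun i => f (σ i)) = M.sum f := by
  have h := M.sum_sum_comp_equiv (fun p => if p.2 = 0 then f p.1 else M.zero)
    (σ.prodCongr (Equiv.refl ℕ))
  simpa only [Equiv.prodCongr_apply, Prod.map, Equiv.refl_apply, sum_ite_eq_zero] using h

lemma add_zero (a : H) : M.add a M.zero = a :=
  M.a1 _ fun i hi => by simp [hi]

lemma zero_add (a : H) : M.add M.zero a = a :=
  calc M.add M.zero a = M.sum (fun i => if i = 0 then a else M.zero) := by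
        rw [add, ← M.sum_comp_equiv (Equiv.swap 0 1)]
        congr 1
        funext i
        rcases i with _ | _ | i <;> simp [Equiv.swap_apply_of_ne_of_ne]
    _ = a := M.sum_ite_eq_zero a

lemma add_sum_sum (f g : ℕ → H) :
    M.add (M.sum f) (M.sum g) = M.sum fun i => M.add (f i) (g i) := by
  let x i j := if i = 0 then f j else if i = 1 then g j else M.zero
  calc M.add (M.sum f) (M.sum g) = M.sum fun i => M.sum fun j => x i j := by
        rw [add]
        congr 1
        funext i
        rcases i with _ | _ | i <;> simp [x, M.sum_const_zero]
    _ = M.sum fun j => M.sum fun i => x i j := M.sum_sum_comm x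

-- Writing `c` as `0 + c` turns `(a + b) + c` into the termwise sum of `(a, b)` and `(0, c)`.
lemma add_assoc (a b c : H) : M.add (M.add a b) c = M.add a (M.add b c) := by
  have h := M.add_sum_sum (fun i => if i = 0 then a else if i = 1 then b else M.zero)
    (fun i => if i = 0 then M.zero else if i = 1 then c else M.zero)
  change M.add (M.add a b) (M.add M.zero c) = _ at h
  rw [M.zero_add] at h
  rw [h, add]
  congr 1
  funext i
  rcases i with _ | _ | i <;> simp [M.add_zero]

lemma infMul_infMul (a : H) : M.infMul (M.infMul a) = M.infMul a := by
  simpa [infMul] using M.a2 (fun _ => a) (Denumerable.eqv (ℕ × ℕ))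

lemma infMul_add (a b : H) : M.infMul (M.add a b) = M.add (M.infMul a) (M.infMul b) :=
  (M.add_sum_sum _ _).symm

lemma nsmul_add_eq_of_add_eq {a b : H} (h : M.add a b = b) (n : ℕ) :
    M.add (M.nsmul n a) b = b := by
  induction n with
  | zero => exact M.zero_add b
  | succ n ih => rw [nsmul, M.add_assoc, ih, h]

lemma infMul_add_infMul_eq_of_add_eq {a x : H} (h : M.add a (M.infMul x) = M.infMul x) :
    M.add (M.infMul a) (M.infMul x) = M.infMul x := by
  conv_rhs => rw [← M.infMul_infMul x, ← h]
  rw [M.infMul_add, M.infMul_infMul]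

end AlephMonoid

/-- if a + ℵ₀·x = ℵ₀·x then n·a + ℵ₀·x = ℵ₀·x for every finite n ≥ 1,
and moreover ℵ₀·a + ℵ₀·x = ℵ₀·x. -/
theorem absorb_nsmul_and_infMul {H : Type*} (M : AlephMonoid H) (x a : H)
    (h : M.add a (M.infMul x) = M.infMul x) :
    (∀ n : ℕ, 1 ≤ n → M.add (M.nsmul n a) (M.infMul x) = M.infMul x) ∧
    M.add (M.infMul a) (M.infMul x) = M.infMul x :=
  ⟨fun n _ => M.nsmul_add_eq_of_add_eq h n, M.infMul_add_infMul_eq_of_add_eq h⟩
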